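/- arXiv:2405.03361 — 2 statements merged into one kernel-verified Lean document; each statement's English description precedes it below -/
import Mathlib

section
/- (Csiszár sum identity.) Let Y_1,…,Y_n and Z_1,…,Z_n be random variables with values in finite nonempty types on a common probability space. Then ∑_{i=1}^{n} I((Z_{i+1},…,Z_n); Y_i | (Y_1,…,Y_{i-1})) = ∑_{i=1}^{n} I((Y_1,…,Y_{i-1}); Z_i | (Z_{i+1},…,Z_n)), where for i = 1 the conditioning tuple (Y_1,…,Y_0) is empty (the conditional mutual information is unconditional) and for i = n the tuple (Z_{n+1},…,Z_n) is empty. -/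
open MeasureTheory Real ENNReal

variable {Ω : Type*} [MeasurableSpace Ω]

/-- Shannon entropy of a random variable with values in a finite type. -/
noncomputable def shEntropy {α : Type*} [Fintype α] (μ : Measure Ω) (X : Ω → α) : ℝ :=
  ∑ a : α, Real.negMulLog (μ (X ⁻¹' {a})).toReal

/-- Conditional Shannon entropy `H(X|Y)`. -/
noncomputable def shCondEntropy {α β : Type*} [Fintype α] [Fintype β]
    (μ : Measure Ω) (X : Ω → α) (Y : Ω → β) : ℝ :=
  shEntropy μ (fun ω => (X ω, Y ω)) - shEntropy μ Y

/-- Mutual information `I(X;Y)`. -/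
noncomputable def shMutualInfo {α β : Type*} [Fintype α] [Fintype β]
    (μ : Measure Ω) (X : Ω → α) (Y : Ω → β) : ℝ :=
  shEntropy μ X + shEntropy μ Y - shEntropy μ (fun ω => (X ω, Y ω))

/-- Conditional mutual information `I(X;Y|Z)`. -/
noncomputable def shCondMutualInfo {α β γ : Type*} [Fintype α] [Fintype β] [Fintype γ]
    (μ : Measure Ω) (X : Ω → α) (Y : Ω → β) (Z : Ω → γ) : ℝ :=
  shCondEntropy μ X Z + shCondEntropy μ Y Z - shCondEntropy μ (fun ω => (X ω, Y ω)) Z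

/-- Discrete conditional independence of `X` and `Y` given `Z`:
the conditional joint law factorizes. -/
def CondIndepRV {α β γ : Type*} (μ : Measure Ω) (X : Ω → α) (Y : Ω → β) (Z : Ω → γ) : Prop :=
  ∀ (a : α) (b : β) (c : γ),
    μ (X ⁻¹' {a} ∩ Y ⁻¹' {b} ∩ Z ⁻¹' {c}) * μ (Z ⁻¹' {c})
      = μ (X ⁻¹' {a} ∩ Z ⁻¹' {c}) * μ (Y ⁻¹' {b} ∩ Z ⁻¹' {c})

/-- Mutual independence of a finite family of discrete random variables. -/
def MutuallyIndepRV {ι : Type*} [Fintype ι] {α : ι → Type*} (μ : Measure Ω)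
    (X : ∀ i, Ω → α i) : Prop :=
  ∀ s : ∀ i, α i, μ (⋂ i, (X i) ⁻¹' {s i}) = ∏ i, μ ((X i) ⁻¹' {s i})
lemma shEntropy_comp_inj {α β : Type*} [Fintype α] [Fintype β] (μ : Measure Ω)
    (X : Ω → α) (e : α → β) (he : Function.Injective e) :
    shEntropy μ (fun ω => e (X ω)) = shEntropy μ X := by
  classical
  unfold shEntropy
  have h1 : ∑ b : β, Real.negMulLog (μ ((fun ω => e (X ω)) ⁻¹' {b})).toReal
      = ∑ b ∈ Finset.univ.image e, Real.negMulLog (μ ((fun ω => e (X ω)) ⁻¹' {b})).toReal := by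
    refine (Finset.sum_subset (Finset.subset_univ _) ?_).symm
    intro b _ hb
    have hemp : (fun ω => e (X ω)) ⁻¹' {b} = ∅ := by
      ext ω
      simp only [Set.mem_preimage, Set.mem_singleton_iff, Set.mem_empty_iff_false, iff_false]
      intro h
      exact hb (Finset.mem_image.mpr ⟨X ω, Finset.mem_univ _, h⟩)
    rw [hemp]
    simp
  rw [h1, Finset.sum_image (fun a _ a' _ h => he h)]
  refine Finset.sum_congr rfl fun a _ => ?_
  have hp : (fun ω => e (X ω)) ⁻¹' {e a} = X ⁻¹' {a} := by
    ext ω; simp [he.eq_iff]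
  rw [hp]

lemma shEntropy_of_subsingleton {α : Type*} [Fintype α] [Subsingleton α]
    (μ : Measure Ω) [IsProbabilityMeasure μ] (X : Ω → α) :
    shEntropy μ X = 0 := by
  unfold shEntropy
  refine Finset.sum_eq_zero fun a _ => ?_
  have h : X ⁻¹' {a} = Set.univ := by
    ext ω; simp [Subsingleton.elim (X ω) a]
  rw [h]
  simp

lemma shEntropy_pair_right {α β : Type*} [Fintype α] [Fintype β] [Subsingleton β] [Nonempty β]
    (μ : Measure Ω) (X : Ω → α) (W : Ω → β) :
    shEntropy μ (fun ω => (X ω, W ω)) = shEntropy μ X := by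
  obtain ⟨d⟩ := ‹Nonempty β›
  have h : (fun ω => ((X ω, W ω) : α × β)) = fun ω => (X ω, d) := by
    funext ω; exact congrArg (Prod.mk (X ω)) (Subsingleton.elim _ _)
  rw [h]
  exact shEntropy_comp_inj μ X (fun a => (a, d)) fun a a' h => congrArg Prod.fst h

lemma shEntropy_pair_left {α β : Type*} [Fintype α] [Fintype β] [Subsingleton α] [Nonempty α]
    (μ : Measure Ω) (W : Ω → α) (X : Ω → β) :
    shEntropy μ (fun ω => (W ω, X ω)) = shEntropy μ X := by
  obtain ⟨d⟩ := ‹Nonempty α›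
  have h : (fun ω => ((W ω, X ω) : α × β)) = fun ω => (d, X ω) := by
    funext ω; exact congrArg (fun a => (a, X ω)) (Subsingleton.elim _ _)
  rw [h]
  exact shEntropy_comp_inj μ X (fun b => (d, b)) fun a a' h => congrArg Prod.snd h

def partA {n : ℕ} {𝒴 : Fin n → Type*} (Y : ∀ i, Ω → 𝒴 i) (k : ℕ) :
    Ω → ∀ j : {j : Fin n // (j : ℕ) < k}, 𝒴 j.1 := fun ω j => Y j.1 ω

def partB {n : ℕ} {𝒵 : Fin n → Type*} (Z : ∀ i, Ω → 𝒵 i) (k : ℕ) :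
    Ω → ∀ j : {j : Fin n // k ≤ (j : ℕ)}, 𝒵 j.1 := fun ω j => Z j.1 ω

noncomputable def fE {n : ℕ} {𝒴 : Fin n → Type*} [∀ i, Fintype (𝒴 i)]
    {𝒵 : Fin n → Type*} [∀ i, Fintype (𝒵 i)] (μ : Measure Ω)
    (Y : ∀ i, Ω → 𝒴 i) (Z : ∀ i, Ω → 𝒵 i) (k : ℕ) : ℝ :=
  shEntropy μ (partA Y k) + shEntropy μ (partB Z k)
    - shEntropy μ (fun ω => (partA Y k ω, partB Z k ω))


def splitA {n : ℕ} {𝒴 : Fin n → Type*} (i : Fin n)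
    (g : ∀ j : {j : Fin n // (j : ℕ) < (i : ℕ) + 1}, 𝒴 j.1) :
    𝒴 i × ∀ j : {j : Fin n // (j : ℕ) < (i : ℕ)}, 𝒴 j.1 :=
  (g ⟨i, Nat.lt_succ_self _⟩,
   fun j : {j : Fin n // (j : ℕ) < (i : ℕ)} => g ⟨j.1, Nat.lt_succ_of_lt j.2⟩)

def splitB {n : ℕ} {𝒵 : Fin n → Type*} (i : Fin n)
    (g : ∀ j : {j : Fin n // (i : ℕ) ≤ (j : ℕ)}, 𝒵 j.1) :
    𝒵 i × ∀ j : {j : Fin n // (i : ℕ) + 1 ≤ (j : ℕ)}, 𝒵 j.1 :=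
  (g ⟨i, Nat.le_refl _⟩,
   fun j : {j : Fin n // (i : ℕ) + 1 ≤ (j : ℕ)} => g ⟨j.1, Nat.le_of_succ_le j.2⟩)

def map3 {n : ℕ} {𝒴 : Fin n → Type*} {𝒵 : Fin n → Type*} (i : Fin n)
    (p : (∀ j : {j : Fin n // (j : ℕ) < (i : ℕ) + 1}, 𝒴 j.1)
          × (∀ j : {j : Fin n // (i : ℕ) + 1 ≤ (j : ℕ)}, 𝒵 j.1)) :
    ((∀ j : {j : Fin n // (i : ℕ) + 1 ≤ (j : ℕ)}, 𝒵 j.1) × 𝒴 i)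
      × ∀ j : {j : Fin n // (j : ℕ) < (i : ℕ)}, 𝒴 j.1 :=
  ((p.2, (splitA i p.1).1), (splitA i p.1).2)

def map4 {n : ℕ} {𝒴 : Fin n → Type*} {𝒵 : Fin n → Type*} (i : Fin n)
    (p : (∀ j : {j : Fin n // (j : ℕ) < (i : ℕ)}, 𝒴 j.1)
          × (∀ j : {j : Fin n // (i : ℕ) ≤ (j : ℕ)}, 𝒵 j.1)) :
    ((∀ j : {j : Fin n // (j : ℕ) < (i : ℕ)}, 𝒴 j.1) × 𝒵 i)
      × ∀ j : {j : Fin n // (i : ℕ) + 1 ≤ (j : ℕ)}, 𝒵 j.1 :=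
  ((p.1, (splitB i p.2).1), (splitB i p.2).2)

lemma injA {n : ℕ} {𝒴 : Fin n → Type*} (i : Fin n) :
    Function.Injective (splitA (𝒴 := 𝒴) i) := by
  intro g g' h
  funext j
  obtain ⟨⟨jv, hjn⟩, hj⟩ := j
  rcases Nat.lt_succ_iff_lt_or_eq.mp hj with h' | h'
  · exact congrFun (congrArg Prod.snd h) ⟨⟨jv, hjn⟩, h'⟩
  · have hji : (⟨jv, hjn⟩ : Fin n) = i := Fin.ext h'
    subst hji
    exact congrArg Prod.fst h

lemma injB {n : ℕ} {𝒵 : Fin n → Type*} (i : Fin n) :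
    Function.Injective (splitB (𝒵 := 𝒵) i) := by
  intro g g' h
  funext j
  obtain ⟨⟨jv, hjn⟩, hj⟩ := j
  rcases Nat.eq_or_lt_of_le hj with h' | h'
  · have hji : (⟨jv, hjn⟩ : Fin n) = i := Fin.ext h'.symm
    subst hji
    exact congrArg Prod.fst h
  · exact congrFun (congrArg Prod.snd h) ⟨⟨jv, hjn⟩, h'⟩

set_option maxHeartbeats 2000000 in
lemma key_step {n : ℕ} {𝒴 : Fin n → Type*} [∀ i, Fintype (𝒴 i)]
    {𝒵 : Fin n → Type*} [∀ i, Fintype (𝒵 i)] (μ : Measure Ω)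
    (Y : ∀ i, Ω → 𝒴 i) (Z : ∀ i, Ω → 𝒵 i) (i : Fin n) :
    shCondMutualInfo μ (partB Z ((i : ℕ) + 1)) (Y i) (partA Y (i : ℕ))
      - shCondMutualInfo μ (partA Y (i : ℕ)) (Z i) (partB Z ((i : ℕ) + 1))
      = fE μ Y Z ((i : ℕ) + 1) - fE μ Y Z (i : ℕ) := by
  have h1 : shEntropy μ (fun ω => (Y i ω, partA Y (i : ℕ) ω))
      = shEntropy μ (partA Y ((i : ℕ) + 1)) :=
    shEntropy_comp_inj μ (partA Y ((i : ℕ) + 1)) (splitA i) (injA (𝒴 := 𝒴) i)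
  have h2 : shEntropy μ (fun ω => (Z i ω, partB Z ((i : ℕ) + 1) ω))
      = shEntropy μ (partB Z (i : ℕ)) :=
    shEntropy_comp_inj μ (partB Z (i : ℕ)) (splitB i) (injB (𝒵 := 𝒵) i)
  have he3 : Function.Injective (map3 (𝒴 := 𝒴) (𝒵 := 𝒵) i) := by
    intro p q h
    have hb : p.2 = q.2 := congrArg (fun x => x.1.1) h
    have ha : p.1 = q.1 := injA (𝒴 := 𝒴) i
      (Prod.ext_iff.mpr ⟨congrArg (fun x => x.1.2) h, congrArg (fun x => x.2) h⟩)
    exact Prod.ext_iff.mpr ⟨ha, hb⟩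
  have h3 : shEntropy μ (fun ω => ((partB Z ((i : ℕ) + 1) ω, Y i ω), partA Y (i : ℕ) ω))
      = shEntropy μ (fun ω => (partA Y ((i : ℕ) + 1) ω, partB Z ((i : ℕ) + 1) ω)) :=
    shEntropy_comp_inj μ (fun ω => (partA Y ((i : ℕ) + 1) ω, partB Z ((i : ℕ) + 1) ω)) (map3 i) he3
  have he4 : Function.Injective (map4 (𝒴 := 𝒴) (𝒵 := 𝒵) i) := by
    intro p q h
    have ha : p.1 = q.1 := congrArg (fun x => x.1.1) h
    have hb : p.2 = q.2 := injB (𝒵 := 𝒵) i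
      (Prod.ext_iff.mpr ⟨congrArg (fun x => x.1.2) h, congrArg (fun x => x.2) h⟩)
    exact Prod.ext_iff.mpr ⟨ha, hb⟩
  have h4 : shEntropy μ (fun ω => ((partA Y (i : ℕ) ω, Z i ω), partB Z ((i : ℕ) + 1) ω))
      = shEntropy μ (fun ω => (partA Y (i : ℕ) ω, partB Z (i : ℕ) ω)) :=
    shEntropy_comp_inj μ (fun ω => (partA Y (i : ℕ) ω, partB Z (i : ℕ) ω)) (map4 i) he4
  have h5 : shEntropy μ (fun ω => (partB Z ((i : ℕ) + 1) ω, partA Y (i : ℕ) ω))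
      = shEntropy μ (fun ω => (partA Y (i : ℕ) ω, partB Z ((i : ℕ) + 1) ω)) :=
    shEntropy_comp_inj μ (fun ω => (partA Y (i : ℕ) ω, partB Z ((i : ℕ) + 1) ω))
      Prod.swap Prod.swap_injective
  simp only [shCondMutualInfo, shCondEntropy, fE]
  rw [h5, h1, h2, h3, h4]
  ring


/-- Csiszár sum identity. -/
theorem csiszar_sum_identity
    (μ : Measure Ω) [IsProbabilityMeasure μ] {n : ℕ}
    {𝒴 : Fin n → Type*} [∀ i, Fintype (𝒴 i)] [∀ i, Nonempty (𝒴 i)]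
    {𝒵 : Fin n → Type*} [∀ i, Fintype (𝒵 i)] [∀ i, Nonempty (𝒵 i)]
    (Y : ∀ i, Ω → 𝒴 i) (Z : ∀ i, Ω → 𝒵 i) :
    ∑ i, shCondMutualInfo μ
        (fun ω => fun j : {j : Fin n // i < j} => Z j.1 ω) (Y i)
        (fun ω => fun j : {j : Fin n // j < i} => Y j.1 ω)
      = ∑ i, shCondMutualInfo μ
        (fun ω => fun j : {j : Fin n // j < i} => Y j.1 ω) (Z i)
        (fun ω => fun j : {j : Fin n // i < j} => Z j.1 ω) := by
  rw [← sub_eq_zero, ← Finset.sum_sub_distrib]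
  have h0 : fE μ Y Z 0 = 0 := by
    haveI : IsEmpty {j : Fin n // (j : ℕ) < 0} := ⟨fun j => Nat.not_lt_zero _ j.2⟩
    unfold fE
    rw [shEntropy_of_subsingleton, shEntropy_pair_left]
    ring
  have hn : fE μ Y Z n = 0 := by
    haveI : IsEmpty {j : Fin n // n ≤ (j : ℕ)} :=
      ⟨fun j => Nat.lt_irrefl n (Nat.lt_of_le_of_lt j.2 j.1.2)⟩
    unfold fE
    rw [shEntropy_of_subsingleton μ (partB Z n), shEntropy_pair_right]
    ring
  calc ∑ i : Fin n,
        (shCondMutualInfo μ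
          (fun ω => fun j : {j : Fin n // i < j} => Z j.1 ω) (Y i)
          (fun ω => fun j : {j : Fin n // j < i} => Y j.1 ω)
        - shCondMutualInfo μ
          (fun ω => fun j : {j : Fin n // j < i} => Y j.1 ω) (Z i)
          (fun ω => fun j : {j : Fin n // i < j} => Z j.1 ω))
      = ∑ i : Fin n, (fE μ Y Z ((i : ℕ) + 1) - fE μ Y Z (i : ℕ)) :=
        Finset.sum_congr rfl fun i _ => key_step μ Y Z i
    _ = ∑ k ∈ Finset.range n, (fE μ Y Z (k + 1) - fE μ Y Z k) :=
        Fin.sum_univ_eq_sum_range (fun k => fE μ Y Z (k + 1) - fE μ Y Z k) n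
    _ = fE μ Y Z n - fE μ Y Z 0 := Finset.sum_range_sub (fE μ Y Z) n
    _ = 0 := by rw [hn, h0, sub_zero]
end

section
/- Let A, B, X, Z be random variables with values in finite nonempty types on a common probability space such that H(A|X) = 0 and Z is conditionally independent of A given X. Then H((A,B)|Z) ≥ H(X|A) + H(Z|X) − H(Z|A) − H(X|(A,B,Z)). -/
open MeasureTheory Real ENNReal

variable {Ω : Type*} [MeasurableSpace Ω]

lemma sum_negMulLog_ge {ι : Type*} [Fintype ι] (q : ι → ℝ) (s : ℝ)
    (hq0 : ∀ i, 0 ≤ q i) (hqs : ∀ i, q i ≤ s) (hs0 : 0 ≤ s) (hs : s ≤ 1)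
    (hsum : s ≤ ∑ i, q i) :
    Real.negMulLog s ≤ ∑ i, Real.negMulLog (q i) := by
  have hlogs : Real.log s ≤ 0 := Real.log_nonpos hs0 hs
  have step1 : ∀ i, -(q i * Real.log s) ≤ Real.negMulLog (q i) := by
    intro i
    rw [Real.negMulLog, neg_mul, neg_le_neg_iff]
    rcases eq_or_lt_of_le (hq0 i) with h | h
    · simp [← h]
    · exact mul_le_mul_of_nonneg_left (Real.log_le_log h (hqs i)) (hq0 i)
  calc Real.negMulLog s = s * (-Real.log s) := by rw [Real.negMulLog]; ring
    _ ≤ (∑ i, q i) * (-Real.log s) :=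
        mul_le_mul_of_nonneg_right hsum (by linarith)
    _ = ∑ i, -(q i * Real.log s) := by rw [Finset.sum_mul]; ring_nf; exact Finset.sum_congr rfl fun i _ => by ring
    _ ≤ ∑ i, Real.negMulLog (q i) := Finset.sum_le_sum fun i _ => step1 i

lemma shEntropy_fst_le {α β : Type*} [Fintype α] [Fintype β]
    (μ : Measure Ω) [IsProbabilityMeasure μ] (W : Ω → α) (Y : Ω → β) :
    shEntropy μ W ≤ shEntropy μ (fun ω => (W ω, Y ω)) := by
  unfold shEntropy
  rw [Fintype.sum_prod_type]
  refine Finset.sum_le_sum fun w _ => ?_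
  refine sum_negMulLog_ge _ _ (fun y => ENNReal.toReal_nonneg) (fun y => ?_)
    ENNReal.toReal_nonneg ?_ ?_
  · refine ENNReal.toReal_mono (measure_ne_top μ _) (measure_mono ?_)
    intro ω hω
    simp only [Set.mem_preimage, Set.mem_singleton_iff, Prod.mk.injEq] at hω ⊢
    exact hω.1
  · simpa using ENNReal.toReal_mono ENNReal.one_ne_top prob_le_one
  · have hsub : W ⁻¹' {w} ⊆ ⋃ y : β, (fun ω => (W ω, Y ω)) ⁻¹' {(w, y)} := by
      intro ω hω
      simp only [Set.mem_preimage, Set.mem_singleton_iff] at hω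
      exact Set.mem_iUnion.2 ⟨Y ω, by simp [hω]⟩
    have h1 : μ (W ⁻¹' {w}) ≤ ∑ y : β, μ ((fun ω => (W ω, Y ω)) ⁻¹' {(w, y)}) :=
      (measure_mono hsub).trans (measure_iUnion_fintype_le _ _)
    have h2 := ENNReal.toReal_mono (a := μ (W ⁻¹' {w}))
      (ENNReal.sum_ne_top.2 fun y _ => measure_ne_top μ _) h1
    rwa [ENNReal.toReal_sum (fun y _ => measure_ne_top μ _)] at h2

lemma shEntropy_comp_equiv {α β : Type*} [Fintype α] [Fintype β] (μ : Measure Ω)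
    (T : Ω → α) (e : α ≃ β) :
    shEntropy μ (fun ω => e (T ω)) = shEntropy μ T := by
  unfold shEntropy
  rw [← Equiv.sum_comp e]
  refine Finset.sum_congr rfl fun a _ => ?_
  have : (fun ω => e (T ω)) ⁻¹' {e a} = T ⁻¹' {a} := by
    ext ω; simp
  rw [this]

/-- lower bound (eqv_sem_2nd_term)/(eqv_src_2nd_term). -/
theorem condEntropy_pair_ge_lower_bound
    (μ : Measure Ω) [IsProbabilityMeasure μ]
    {𝒜 ℬ 𝒳 𝒵 : Type*} [Fintype 𝒜] [Nonempty 𝒜] [Fintype ℬ] [Nonempty ℬ]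
    [Fintype 𝒳] [Nonempty 𝒳] [Fintype 𝒵] [Nonempty 𝒵]
    (A : Ω → 𝒜) (B : Ω → ℬ) (X : Ω → 𝒳) (Z : Ω → 𝒵)
    (hdet : shCondEntropy μ A X = 0)
    (hmarkov : CondIndepRV μ Z A X) :
    shCondEntropy μ (fun ω => (A ω, B ω)) Z
      ≥ shCondEntropy μ X A + shCondEntropy μ Z X - shCondEntropy μ Z A
        - shCondEntropy μ X (fun ω => (A ω, B ω, Z ω)) := by
  have e1 : shEntropy μ (fun ω => (A ω, X ω)) = shEntropy μ X := by
    unfold shCondEntropy at hdet; linarith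
  have e2 : shEntropy μ (fun ω => (X ω, A ω)) = shEntropy μ (fun ω => (A ω, X ω)) :=
    shEntropy_comp_equiv μ (fun ω => (A ω, X ω)) (Equiv.prodComm 𝒜 𝒳)
  have e3 : shEntropy μ (fun ω => (A ω, B ω, Z ω))
      = shEntropy μ (fun ω => ((A ω, B ω), Z ω)) :=
    shEntropy_comp_equiv μ (fun ω => ((A ω, B ω), Z ω)) (Equiv.prodAssoc 𝒜 ℬ 𝒵)
  have e4 : shEntropy μ (fun ω => (X ω, (A ω, B ω, Z ω)))
      = shEntropy μ (fun ω => ((Z ω, X ω), (A ω, B ω))) :=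
    shEntropy_comp_equiv μ (fun ω => ((Z ω, X ω), (A ω, B ω)))
      ⟨fun p => (p.1.2, (p.2.1, p.2.2, p.1.1)),
       fun q => ((q.2.2.2, q.1), (q.2.1, q.2.2.1)), fun p => rfl, fun q => rfl⟩
  have i1 : shEntropy μ Z ≤ shEntropy μ (fun ω => (Z ω, A ω)) := shEntropy_fst_le μ Z A
  have i2 : shEntropy μ (fun ω => (Z ω, X ω))
      ≤ shEntropy μ (fun ω => ((Z ω, X ω), (A ω, B ω))) :=
    shEntropy_fst_le μ (fun ω => (Z ω, X ω)) (fun ω => (A ω, B ω))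
  simp only [shCondEntropy, ge_iff_le]
  linarith
end
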